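/- θ(27 − (77/2)i, 23 + (77/9)i) = θ(27 + (77/2)i, 23 − (77/9)i) = (729/2116, 1240029/97336, 531441/13181630464), where i = √−1 and θ(u,v) = (i₁(u,v), i₂(u,v), i₃(u,v)). (These are exceptional points where the Jacobian determinant of θ vanishes; the corresponding genus 2 curve has automorphism group D₄ and 2 degree-3 elliptic subcovers.) -/
import Mathlib


/-- `q(u,v) = −405 + 252u + 4u² − 54v − 12uv + 3v²`. -/
def q (u v : ℂ) : ℂ := -405 + 252*u + 4*u^2 - 54*v - 12*u*v + 3*v^2

/-- The absolute invariant `i₁` of the genus 2 curve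
`y² = (4x³v² + x²v² + 2xv + 1)(x³v² + x²uv + xv + 1)` with `(3,3)`-split Jacobian. -/
noncomputable def i1 (u v : ℂ) : ℂ :=
  (144 / (v * q u v ^ 2)) *
    (u^4*v - 24*u^4 + 1188*u^3 - 66*u^3*v + 9*u^2*v^2 + 297*u^2*v + 138*u*v^2
      - 8424*u*v - 36*v^3 + 945*v^2 + 14580*v)

/-- The absolute invariant `i₂` of the genus 2 curve
`y² = (4x³v² + x²v² + 2xv + 1)(x³v² + x²uv + xv + 1)` with `(3,3)`-split Jacobian. -/
noncomputable def i2 (u v : ℂ) : ℂ :=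
  (-864 / (v^2 * q u v ^ 3)) *
    (2*u^6*v^2 - 72*u^6*v + 432*u^6 + 234*u^5*v^2 - 7020*u^5*v - 81*u^4*v^3
      - 1350*u^4*v^2 + 136080*u^4*v - 72*u^3*v^3 - 5940*u^3*v^2 - 650268*u^3*v
      + 324*u^2*v^4 + 14850*u^2*v^3 - 307638*u^2*v^2 - 5832*u*v^4 - 21384*u*v^3
      + 3162402*u*v^2 + 26676*v^4 - 473121*v^3 - 3346110*v^2)

/-- The absolute invariant `i₃` of the genus 2 curve
`y² = (4x³v² + x²v² + 2xv + 1)(x³v² + x²uv + xv + 1)` with `(3,3)`-split Jacobian. -/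
noncomputable def i3 (u v : ℂ) : ℂ :=
  -243 * (v - 27) * (4*u^3 - u^2*v - 18*u*v + 4*v^2 + 27*v)^3 / (v^3 * q u v ^ 5)

/-- The degree 2 parametrization `θ : (u,v) ↦ (i₁,i₂,i₃)` of the Shaska surface `𝔖₃`. -/
noncomputable def θ (u v : ℂ) : ℂ × ℂ × ℂ := (i1 u v, i2 u v, i3 u v)

lemma hvA : (23 + (77/9) * Complex.I) ≠ (0 : ℂ) := by
  intro h
  have hv : (23 + (77/9) * Complex.I) * ((23 : ℂ) + ((-77 : ℂ)/9)*Complex.I) = (((48778 : ℂ)/81)) := by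
    linear_combination (((-5929 : ℂ)/81)) * Complex.I_sq
  rw [h, zero_mul] at hv
  norm_num at hv

lemma hqA : q (27 - (77/2) * Complex.I) (23 + (77/9) * Complex.I) ≠ (0 : ℂ) := by
  intro h
  have hq : q (27 - (77/2) * Complex.I) (23 + (77/9) * Complex.I) * (((-213118 : ℂ)/27) + ((28336 : ℂ)/3)*Complex.I) = (((110456522500 : ℂ)/729)) := by
    simp only [q]
    linear_combination (((-123161765188 : ℂ)/729) + ((7728190624 : ℂ)/81)*Complex.I) * Complex.I_sq
  rw [h, zero_mul] at hq
  norm_num at hq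

lemma h1A : i1 (27 - (77/2) * Complex.I) (23 + (77/9) * Complex.I) = 729/2116 := by
  have hD : (23 + (77/9) * Complex.I) * q (27 - (77/2) * Complex.I) (23 + (77/9) * Complex.I) ^ 2 ≠ 0 := mul_ne_zero hvA (pow_ne_zero _ hqA)
  rw [i1, div_mul_eq_mul_div, div_eq_iff hD, q]
  linear_combination ((-245887488 : ℂ) + (1577778048 : ℂ)*Complex.I + (-3374691936 : ℂ)*Complex.I^2 + ((21654273256 : ℂ)/9)*Complex.I^3) * Complex.I_sq

lemma h2A : i2 (27 - (77/2) * Complex.I) (23 + (77/9) * Complex.I) = 1240029/97336 := by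
  have hD : (23 + (77/9) * Complex.I) ^ 2 * q (27 - (77/2) * Complex.I) (23 + (77/9) * Complex.I) ^ 3 ≠ 0 :=
    mul_ne_zero (pow_ne_zero _ hvA) (pow_ne_zero _ hqA)
  rw [i2, div_mul_eq_mul_div, div_eq_iff hD, q]
  linear_combination ((52843925933568 : ℂ) + (-568662764060160 : ℂ)*Complex.I + (2382093796864320 : ℂ)*Complex.I^2 + (-4706339749459040 : ℂ)*Complex.I^3 + ((34804453251062110 : ℂ)/9)*Complex.I^4 + (128388186134824 : ℂ)*Complex.I^5 + ((-12357362915476810 : ℂ)/9)*Complex.I^6) * Complex.I_sq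

lemma h3A : i3 (27 - (77/2) * Complex.I) (23 + (77/9) * Complex.I) = 531441/13181630464 := by
  have hD : (23 + (77/9) * Complex.I) ^ 3 * q (27 - (77/2) * Complex.I) (23 + (77/9) * Complex.I) ^ 5 ≠ 0 :=
    mul_ne_zero (pow_ne_zero _ hvA) (pow_ne_zero _ hqA)
  rw [i3, div_eq_iff hD, q]
  linear_combination ((123299792893880064 : ℂ) + (-2149592094744316992 : ℂ)*Complex.I + (16519978877482113264 : ℂ)*Complex.I^2 + ((-219740651084770048156 : ℂ)/3)*Complex.I^3 + ((5547847514725503817907 : ℂ)/27)*Complex.I^4 + ((-121388604849979668042611 : ℂ)/324)*Complex.I^5 + ((15216093749296006004202919 : ℂ)/34992)*Complex.I^6 + ((-367880074337132754582178301 : ℂ)/1259712)*Complex.I^7 + ((10857209971952730914335577 : ℂ)/139968)*Complex.I^8 + ((12022694341448908196374603 : ℂ)/629856)*Complex.I^9 + ((-1259756767136943925789709 : ℂ)/139968)*Complex.I^10 + ((-3344871416191195940889917 : ℂ)/1259712)*Complex.I^11) * Complex.I_sq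

lemma hvB : (23 - (77/9) * Complex.I) ≠ (0 : ℂ) := by
  intro h
  have hv : (23 - (77/9) * Complex.I) * ((23 : ℂ) + ((77 : ℂ)/9)*Complex.I) = (((48778 : ℂ)/81)) := by
    linear_combination (((-5929 : ℂ)/81)) * Complex.I_sq
  rw [h, zero_mul] at hv
  norm_num at hv

lemma hqB : q (27 + (77/2) * Complex.I) (23 - (77/9) * Complex.I) ≠ (0 : ℂ) := by
  intro h
  have hq : q (27 + (77/2) * Complex.I) (23 - (77/9) * Complex.I) * (((-213118 : ℂ)/27) + ((-28336 : ℂ)/3)*Complex.I) = (((110456522500 : ℂ)/729)) := by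
    simp only [q]
    linear_combination (((-123161765188 : ℂ)/729) + ((-7728190624 : ℂ)/81)*Complex.I) * Complex.I_sq
  rw [h, zero_mul] at hq
  norm_num at hq

lemma h1B : i1 (27 + (77/2) * Complex.I) (23 - (77/9) * Complex.I) = 729/2116 := by
  have hD : (23 - (77/9) * Complex.I) * q (27 + (77/2) * Complex.I) (23 - (77/9) * Complex.I) ^ 2 ≠ 0 := mul_ne_zero hvB (pow_ne_zero _ hqB)
  rw [i1, div_mul_eq_mul_div, div_eq_iff hD, q]
  linear_combination ((-245887488 : ℂ) + (-1577778048 : ℂ)*Complex.I + (-3374691936 : ℂ)*Complex.I^2 + ((-21654273256 : ℂ)/9)*Complex.I^3) * Complex.I_sq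

lemma h2B : i2 (27 + (77/2) * Complex.I) (23 - (77/9) * Complex.I) = 1240029/97336 := by
  have hD : (23 - (77/9) * Complex.I) ^ 2 * q (27 + (77/2) * Complex.I) (23 - (77/9) * Complex.I) ^ 3 ≠ 0 :=
    mul_ne_zero (pow_ne_zero _ hvB) (pow_ne_zero _ hqB)
  rw [i2, div_mul_eq_mul_div, div_eq_iff hD, q]
  linear_combination ((52843925933568 : ℂ) + (568662764060160 : ℂ)*Complex.I + (2382093796864320 : ℂ)*Complex.I^2 + (4706339749459040 : ℂ)*Complex.I^3 + ((34804453251062110 : ℂ)/9)*Complex.I^4 + (-128388186134824 : ℂ)*Complex.I^5 + ((-12357362915476810 : ℂ)/9)*Complex.I^6) * Complex.I_sq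

lemma h3B : i3 (27 + (77/2) * Complex.I) (23 - (77/9) * Complex.I) = 531441/13181630464 := by
  have hD : (23 - (77/9) * Complex.I) ^ 3 * q (27 + (77/2) * Complex.I) (23 - (77/9) * Complex.I) ^ 5 ≠ 0 :=
    mul_ne_zero (pow_ne_zero _ hvB) (pow_ne_zero _ hqB)
  rw [i3, div_eq_iff hD, q]
  linear_combination ((123299792893880064 : ℂ) + (2149592094744316992 : ℂ)*Complex.I + (16519978877482113264 : ℂ)*Complex.I^2 + ((219740651084770048156 : ℂ)/3)*Complex.I^3 + ((5547847514725503817907 : ℂ)/27)*Complex.I^4 + ((121388604849979668042611 : ℂ)/324)*Complex.I^5 + ((15216093749296006004202919 : ℂ)/34992)*Complex.I^6 + ((367880074337132754582178301 : ℂ)/1259712)*Complex.I^7 + ((10857209971952730914335577 : ℂ)/139968)*Complex.I^8 + ((-12022694341448908196374603 : ℂ)/629856)*Complex.I^9 + ((-1259756767136943925789709 : ℂ)/139968)*Complex.I^10 + ((3344871416191195940889917 : ℂ)/1259712)*Complex.I^11) * Complex.I_sq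

/-- `θ(27 − (77/2)i, 23 + (77/9)i) = θ(27 + (77/2)i, 23 − (77/9)i)
= (729/2116, 1240029/97336, 531441/13181630464)`: exceptional points of `θ` whose
common image corresponds to a genus 2 curve with automorphism group `D₄` and two
degree-3 elliptic subcovers. -/
theorem stmt_15 :
    θ (27 - (77/2) * Complex.I) (23 + (77/9) * Complex.I)
      = (729/2116, 1240029/97336, 531441/13181630464) ∧
    θ (27 + (77/2) * Complex.I) (23 - (77/9) * Complex.I)
      = (729/2116, 1240029/97336, 531441/13181630464) := by
  exact ⟨by rw [θ, h1A, h2A, h3A], by rw [θ, h1B, h2B, h3B]⟩
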